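/- arXiv:2510.00521 — 3 statements merged into one kernel-verified Lean document; each statement's English description precedes it below -/
import Mathlib

section
/- For every set F ⊆ ℝ^d, the limit superior of the Assouad spectrum as θ → 0⁺ equals the limit of the upper spectrum as θ → 0⁺; that is, limsup_{θ→0⁺} dim_A^θ F = lim_{θ→0⁺} \overline{dim}_A^θ F (in particular the latter limit exists). -/
open Filter Metric Set Topology Bornology ENNReal

noncomputable section

variable {X : Type*} [PseudoMetricSpace X]

/-- `coveringNumber r E` is the smallest number of closed balls of radius `r`
needed to cover `E` (with value `⊤` if no finite cover exists). -/
def coveringNumber (r : ℝ) (E : Set X) : ℕ∞ :=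
  sInf {n : ℕ∞ | ∃ t : Finset X, (E ⊆ ⋃ x ∈ t, closedBall x r) ∧ (t.card : ℕ∞) = n}

/-- The Assouad spectrum `dim_A^θ F`. -/
def assouadSpectrum (θ : ℝ) (F : Set X) : ℝ :=
  sInf {s : ℝ | 0 ≤ s ∧ ∃ C > (0 : ℝ), ∀ R : ℝ, 0 < R → R < 1 → ∀ x ∈ F,
    (coveringNumber (R ^ (1 / θ)) (closedBall x R ∩ F) : ℝ≥0∞)
      ≤ ENNReal.ofReal (C * (R / R ^ (1 / θ)) ^ s)}

/-- The upper spectrum `\overline{dim}_A^θ F`. -/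
def upperSpectrum (θ : ℝ) (F : Set X) : ℝ :=
  sInf {s : ℝ | 0 ≤ s ∧ ∃ C > (0 : ℝ), ∀ r R : ℝ, 0 < r → r ≤ R ^ (1 / θ) →
    R ^ (1 / θ) < R → R < 1 → 0 < R → ∀ x ∈ F,
    (coveringNumber r (closedBall x R ∩ F) : ℝ≥0∞) ≤ ENNReal.ofReal (C * (R / r) ^ s)}

/-- The generalized upper box dimension `\overline{dim}_{GB} F := limsup_{θ → 0⁺} dim_A^θ F`. -/
def genUpperBoxDim (F : Set X) : ℝ :=
  limsup (fun θ : ℝ => assouadSpectrum θ F) (𝓝[>] (0 : ℝ))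

/-- The quasi-Assouad dimension `dim_{qA} F := lim_{θ → 1⁻} \overline{dim}_A^θ F`
(the limit exists by monotonicity, hence equals the limsup). -/
def quasiAssouadDim (F : Set X) : ℝ :=
  limsup (fun θ : ℝ => upperSpectrum θ F) (𝓝[<] (1 : ℝ))

/-- The upper box dimension `\overline{dim}_B F := limsup_{δ → 0⁺} log N_δ(F) / (- log δ)`. -/
def upperBoxDim (F : Set X) : ℝ :=
  limsup (fun δ : ℝ => Real.log ((coveringNumber δ F).toNat : ℝ) / (- Real.log δ))
    (𝓝[>] (0 : ℝ))

/-- The Assouad dimension `dim_A F`. -/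
def assouadDim (F : Set X) : ℝ :=
  sInf {s : ℝ | 0 ≤ s ∧ ∃ C > (0 : ℝ), ∃ ρ > (0 : ℝ), ∀ r R : ℝ, 0 < r → r < R → R < ρ →
    ∀ x ∈ F, (coveringNumber r (closedBall x R ∩ F) : ℝ≥0∞) ≤ ENNReal.ofReal (C * (R / r) ^ s)}

/-- The packing pre-measure at scale `δ`: the supremum of `∑ |B_i|^s` over at most countable
collections of disjoint closed balls of radii at most `δ` (and positive) with centres in `F`,
where `|B_i| = 2 r_i` is the diameter. -/
def packingPre (s δ : ℝ) (F : Set X) : ℝ≥0∞ :=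
  ⨆ (D : Set (X × ℝ)) (_ : D.Countable)
    (_ : ∀ p ∈ D, p.1 ∈ F ∧ 0 < p.2 ∧ p.2 ≤ δ)
    (_ : D.Pairwise fun p q => Disjoint (closedBall p.1 p.2) (closedBall q.1 q.2)),
    ∑' p : D, ENNReal.ofReal ((2 * (p : X × ℝ).2) ^ s)

/-- `𝒫₀^s(F) := lim_{δ → 0} 𝒫_δ^s(F)`; the limit exists by monotonicity and equals the inf. -/
def packingPre₀ (s : ℝ) (F : Set X) : ℝ≥0∞ :=
  ⨅ (δ : ℝ) (_ : 0 < δ), packingPre s δ F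

/-- The packing (outer) measure `𝒫^s(F)`. -/
def packingMeasure (s : ℝ) (F : Set X) : ℝ≥0∞ :=
  ⨅ (G : ℕ → Set X) (_ : F ⊆ ⋃ i, G i), ∑' i, packingPre₀ s (G i)

/-- The packing dimension `dim_P F = inf {s ≥ 0 : 𝒫^s(F) = 0}`. -/
def packingDim (F : Set X) : ℝ :=
  sInf {s : ℝ | 0 ≤ s ∧ packingMeasure s F = 0}

/-!
For `θ ∈ (0, 1)` the Assouad spectrum is the case `r = R ^ (1 / θ)` of the upper spectrum, and the
upper spectrum is nondecreasing in `θ`; hence `limsup_{θ → 0⁺} dim_A^θ F ≤ \overline{dim}_A^θ F`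
for every `θ`. Conversely, to cover `B(x, R) ∩ F` at a scale `r ≤ R ^ (1 / θ)`, first cover it at
the intermediate scale `ρ = r ^ θ ≤ R` by at most `(3 R / ρ) ^ d` balls centred in `F` (a volume
argument), then cover each `B(y, ρ) ∩ F` at scale `r = ρ ^ (1 / θ)` using the Assouad spectrum at
`θ`. This gives `\overline{dim}_A^θ F ≤ (1 - θ) dim_A^θ F + θ d`, and the right-hand side has the
same limsup as `dim_A^θ F` when `θ → 0⁺`.
-/

open MeasureTheory Module
open scoped NNReal

section CoveringNumber

variable {r : ℝ} {A B : Set X}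

theorem coveringNumber_le_card {t : Finset X} (h : A ⊆ ⋃ x ∈ t, closedBall x r) :
    coveringNumber r A ≤ t.card :=
  sInf_le ⟨t, h, rfl⟩

theorem exists_finset_card_eq_coveringNumber (h : coveringNumber r A ≠ ⊤) :
    ∃ t : Finset X, A ⊆ ⋃ x ∈ t, closedBall x r ∧ (t.card : ℕ∞) = coveringNumber r A := by
  obtain ⟨_, hmem, -⟩ := sInf_lt_iff.1 (lt_top_iff_ne_top.2 h)
  exact csInf_mem ⟨_, hmem⟩

theorem coveringNumber_mono_set (h : A ⊆ B) : coveringNumber r A ≤ coveringNumber r B :=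
  le_sInf fun _ ⟨_, ht, hn⟩ => hn ▸ coveringNumber_le_card (h.trans ht)

theorem coveringNumber_union_le :
    coveringNumber r (A ∪ B) ≤ coveringNumber r A + coveringNumber r B := by
  classical
  rcases eq_or_ne (coveringNumber r A) ⊤ with hA | hA
  · simp [hA]
  rcases eq_or_ne (coveringNumber r B) ⊤ with hB | hB
  · simp [hB]
  obtain ⟨s, hs, hsA⟩ := exists_finset_card_eq_coveringNumber hA
  obtain ⟨t, ht, htB⟩ := exists_finset_card_eq_coveringNumber hB
  calc coveringNumber r (A ∪ B) ≤ (s ∪ t).card :=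
        coveringNumber_le_card <| by rw [Finset.set_biUnion_union]; exact union_subset_union hs ht
    _ ≤ s.card + t.card := by exact_mod_cast Finset.card_union_le s t
    _ = _ := by rw [hsA, htB]

theorem coveringNumber_biUnion_le {ι : Type*} (T : Finset ι) (s : ι → Set X) :
    coveringNumber r (⋃ i ∈ T, s i) ≤ ∑ i ∈ T, coveringNumber r (s i) := by
  classical
  induction T using Finset.induction_on with
  | empty => simpa using coveringNumber_le_card (r := r) (A := ∅) (t := ∅) (by simp)
  | insert a T ha ih =>
    rw [Finset.set_biUnion_insert, Finset.sum_insert ha]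
    exact coveringNumber_union_le.trans (add_le_add le_rfl ih)

end CoveringNumber

section Exponents

def assouadSpectrumExponents (θ : ℝ) (F : Set X) : Set ℝ :=
  {s : ℝ | 0 ≤ s ∧ ∃ C > (0 : ℝ), ∀ R : ℝ, 0 < R → R < 1 → ∀ x ∈ F,
    (coveringNumber (R ^ (1 / θ)) (closedBall x R ∩ F) : ℝ≥0∞)
      ≤ ENNReal.ofReal (C * (R / R ^ (1 / θ)) ^ s)}

def upperSpectrumExponents (θ : ℝ) (F : Set X) : Set ℝ :=
  {s : ℝ | 0 ≤ s ∧ ∃ C > (0 : ℝ), ∀ r R : ℝ, 0 < r → r ≤ R ^ (1 / θ) →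
    R ^ (1 / θ) < R → R < 1 → 0 < R → ∀ x ∈ F,
    (coveringNumber r (closedBall x R ∩ F) : ℝ≥0∞) ≤ ENNReal.ofReal (C * (R / r) ^ s)}

variable {θ θ' : ℝ} {F : Set X}

theorem bddBelow_assouadSpectrumExponents : BddBelow (assouadSpectrumExponents θ F) :=
  ⟨0, fun _ hs => hs.1⟩

theorem bddBelow_upperSpectrumExponents : BddBelow (upperSpectrumExponents θ F) :=
  ⟨0, fun _ hs => hs.1⟩

theorem assouadSpectrum_nonneg : 0 ≤ assouadSpectrum θ F :=
  Real.sInf_nonneg fun _ hs => hs.1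

theorem upperSpectrumExponents_subset_assouadSpectrumExponents (hθ0 : 0 < θ) (hθ1 : θ < 1) :
    upperSpectrumExponents θ F ⊆ assouadSpectrumExponents θ F := by
  rintro s ⟨hs0, C, hC, h⟩
  exact ⟨hs0, C, hC, fun R hR0 hR1 => h _ R (by positivity) le_rfl
    (Real.rpow_lt_self_of_lt_one hR0 hR1 (one_lt_one_div hθ0 hθ1)) hR1 hR0⟩

theorem upperSpectrumExponents_anti (hθ0 : 0 < θ) (hθθ' : θ ≤ θ') (hθ'1 : θ' < 1) :
    upperSpectrumExponents θ' F ⊆ upperSpectrumExponents θ F := by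
  rintro s ⟨hs0, C, hC, h⟩
  refine ⟨hs0, C, hC, fun r R hr hrR _ hR1 hR0 => h r R hr (hrR.trans ?_) ?_ hR1 hR0⟩
  · exact Real.rpow_le_rpow_of_exponent_ge hR0 hR1.le (one_div_le_one_div_of_le hθ0 hθθ')
  · exact Real.rpow_lt_self_of_lt_one hR0 hR1 (one_lt_one_div (hθ0.trans_le hθθ') hθ'1)

end Exponents

theorem Real.div_rpow_mul_div_rpow_le {R r θ t D : ℝ} (hr : 0 < r) (hR0 : 0 < R) (hR1 : R ≤ 1)
    (hθ1 : θ ≤ 1) (htD : t ≤ D) :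
    (R / r ^ θ) ^ D * (r ^ θ / r) ^ t ≤ (R / r) ^ ((1 - θ) * t + θ * D) := by
  have hrθ : 0 < r ^ θ := Real.rpow_pos_of_pos hr θ
  have hRθ : 0 < R / r ^ θ := by positivity
  have hθr : 0 < r ^ θ / r := by positivity
  rw [← Real.log_le_log_iff (by positivity) (by positivity),
    Real.log_mul (Real.rpow_pos_of_pos hRθ D).ne' (Real.rpow_pos_of_pos hθr t).ne',
    Real.log_rpow hRθ, Real.log_rpow hθr, Real.log_rpow (by positivity),
    Real.log_div hR0.ne' hrθ.ne', Real.log_div hrθ.ne' hr.ne', Real.log_div hR0.ne' hr.ne',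
    Real.log_rpow hr]
  -- the two sides differ by `(1 - θ) * (D - t) * (- log R) ≥ 0`
  nlinarith [mul_nonneg (mul_nonneg (sub_nonneg.2 hθ1) (sub_nonneg.2 htD))
    (neg_nonneg.2 (Real.log_nonpos hR0.le hR1))]

section FiniteDimensional

variable {E : Type*} [NormedAddCommGroup E] [NormedSpace ℝ E] [FiniteDimensional ℝ E]

theorem card_mul_pow_le_of_isSeparated {t : Finset E} {x : E} {R : ℝ} {ε : ℝ≥0} (hR : 0 ≤ R)
    (ht : ↑t ⊆ closedBall x R) (hsep : IsSeparated ε (t : Set E)) :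
    (t.card : ℝ) * (ε / 2) ^ finrank ℝ E ≤ (R + ε / 2) ^ finrank ℝ E := by
  borelize E
  set μ : Measure E := Measure.addHaar
  have hdisj : (t : Set E).PairwiseDisjoint fun y => closedBall y (ε / 2) := by
    intro y hy z hz hyz
    have : (ε : ℝ) < dist y z := by
      have h : (ε : ℝ≥0∞) < edist y z := hsep hy hz hyz
      rwa [edist_nndist, ENNReal.coe_lt_coe, ← NNReal.coe_lt_coe, coe_nndist] at h
    exact closedBall_disjoint_closedBall (by linarith)
  have hvol : (t.card : ℝ≥0∞) * (ENNReal.ofReal ((ε / 2) ^ finrank ℝ E) * μ (ball 0 1))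
      ≤ ENNReal.ofReal ((R + ε / 2) ^ finrank ℝ E) * μ (ball 0 1) :=
    calc (t.card : ℝ≥0∞) * (ENNReal.ofReal ((ε / 2) ^ finrank ℝ E) * μ (ball 0 1))
        = μ (⋃ y ∈ t, closedBall y (ε / 2)) := by
          rw [measure_biUnion_finset hdisj fun y _ => measurableSet_closedBall,
            Finset.sum_congr rfl fun y _ => Measure.addHaar_closedBall μ y (by positivity),
            Finset.sum_const, nsmul_eq_mul]
      _ ≤ μ (closedBall x (R + ε / 2)) := measure_mono <| iUnion₂_subset fun y hy =>
          closedBall_subset_closedBall' (by linarith [mem_closedBall.mp (ht hy)])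
      _ = _ := Measure.addHaar_closedBall μ x (by positivity)
  rw [← mul_assoc, ENNReal.mul_le_mul_iff_left (measure_ball_pos μ _ one_pos).ne'
    measure_ball_lt_top.ne, ← ENNReal.ofReal_natCast, ← ENNReal.ofReal_mul (by positivity),
    ENNReal.ofReal_le_ofReal_iff (by positivity)] at hvol
  exact hvol

theorem card_le_of_isSeparated {t : Finset E} {x : E} {R : ℝ} {ε : ℝ≥0} (hε : 0 < ε)
    (hεR : ε ≤ R) (ht : ↑t ⊆ closedBall x R) (hsep : IsSeparated ε (t : Set E)) :
    (t.card : ℝ) ≤ 3 ^ finrank ℝ E * (R / ε) ^ finrank ℝ E := by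
  have hε' : (0 : ℝ) < ε := hε
  have hvol := card_mul_pow_le_of_isSeparated (hε'.le.trans hεR) ht hsep
  refine le_of_mul_le_mul_right (hvol.trans ?_) (by positivity)
  calc (R + ε / 2) ^ finrank ℝ E ≤ (3 * R / 2) ^ finrank ℝ E :=
        pow_le_pow_left₀ (by linarith) (by linarith) _
    _ = 3 ^ finrank ℝ E * (R / ε) ^ finrank ℝ E * (ε / 2) ^ finrank ℝ E := by
        simp only [← mul_pow]; congr 1; field_simp

theorem packingNumber_le_floor {A : Set E} {x : E} {R : ℝ} {ε : ℝ≥0} (hε : 0 < ε)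
    (hεR : ε ≤ R) (hA : A ⊆ closedBall x R) :
    packingNumber ε A ≤ ⌊3 ^ finrank ℝ E * (R / ε) ^ finrank ℝ E⌋₊ := by
  refine iSup₂_le fun C hCA => iSup_le fun hsep => ?_
  by_contra! hlt
  obtain ⟨S, hSC, hS⟩ := exists_subset_encard_eq (Order.add_one_le_of_lt hlt)
  have hfin : S.Finite := finite_of_encard_eq_coe (by rw [hS]; norm_cast)
  have hle := card_le_of_isSeparated (t := hfin.toFinset) hε hεR
    (by simpa using (hSC.trans hCA).trans hA) (by simpa using hsep.subset hSC)
  rw [hfin.encard_eq_coe_toFinset_card] at hS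
  norm_cast at hS
  rw [hS] at hle
  push_cast at hle
  linarith [Nat.lt_floor_add_one (3 ^ finrank ℝ E * (R / ε) ^ finrank ℝ E)]

/-- A maximal `r`-separated subset of `A` is an `r`-cover of `A` by balls centred in `A`. -/
theorem exists_finset_subset_cover_card_le {A : Set E} {x : E} {R r : ℝ}
    (hA : A ⊆ closedBall x R) (hr : 0 < r) (hrR : r ≤ R) :
    ∃ T : Finset E, ↑T ⊆ A ∧ A ⊆ ⋃ y ∈ T, closedBall y r ∧
      (T.card : ℝ) ≤ 3 ^ finrank ℝ E * (R / r) ^ finrank ℝ E := by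
  set ε : ℝ≥0 := ⟨r, hr.le⟩
  have hpack : packingNumber ε A ≠ ⊤ :=
    ne_top_of_le_ne_top (by simp) (packingNumber_le_floor (ε := ε) hr hrR hA)
  have hfin : (maximalSeparatedSet ε A).Finite := by
    rwa [← encard_ne_top_iff, encard_maximalSeparatedSet hpack]
  refine ⟨hfin.toFinset, by simpa using maximalSeparatedSet_subset, ?_,
    card_le_of_isSeparated (ε := ε) hr hrR (by simpa using maximalSeparatedSet_subset.trans hA)
      (by simpa using isSeparated_maximalSeparatedSet)⟩
  simp only [Set.Finite.mem_toFinset]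
  exact isCover_iff_subset_iUnion_closedBall.mp (isCover_maximalSeparatedSet hpack)

theorem coveringNumber_closedBall_inter_le (F : Set E) (x : E) {R r : ℝ} (hr : 0 < r)
    (hrR : r ≤ R) : (coveringNumber r (closedBall x R ∩ F) : ℝ≥0∞)
      ≤ ENNReal.ofReal (3 ^ finrank ℝ E * (R / r) ^ (finrank ℝ E : ℝ)) := by
  obtain ⟨T, -, hcov, hcard⟩ :=
    exists_finset_subset_cover_card_le (inter_subset_left (t := F)) hr hrR
  calc (coveringNumber r (closedBall x R ∩ F) : ℝ≥0∞) ≤ ((T.card : ℕ∞) : ℝ≥0∞) :=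
        ENat.toENNReal_le.mpr (coveringNumber_le_card hcov)
    _ = ENNReal.ofReal T.card := by rw [ENat.toENNReal_coe, ENNReal.ofReal_natCast]
    _ ≤ _ := ENNReal.ofReal_le_ofReal (by rwa [Real.rpow_natCast])

variable {θ θ' t : ℝ} {F : Set E}

theorem finrank_mem_upperSpectrumExponents (θ : ℝ) (F : Set E) :
    (finrank ℝ E : ℝ) ∈ upperSpectrumExponents θ F :=
  ⟨Nat.cast_nonneg _, 3 ^ finrank ℝ E, by positivity, fun _ _ hr hrR hRR _ _ x _ =>
    coveringNumber_closedBall_inter_le F x hr (hrR.trans hRR.le)⟩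

theorem finrank_mem_assouadSpectrumExponents (hθ0 : 0 < θ) (hθ1 : θ < 1) :
    (finrank ℝ E : ℝ) ∈ assouadSpectrumExponents θ F :=
  upperSpectrumExponents_subset_assouadSpectrumExponents hθ0 hθ1
    (finrank_mem_upperSpectrumExponents θ F)

theorem upperSpectrum_le_finrank : upperSpectrum θ F ≤ finrank ℝ E :=
  csInf_le bddBelow_upperSpectrumExponents (finrank_mem_upperSpectrumExponents θ F)

theorem assouadSpectrum_le_finrank (hθ0 : 0 < θ) (hθ1 : θ < 1) :
    assouadSpectrum θ F ≤ finrank ℝ E :=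
  csInf_le bddBelow_assouadSpectrumExponents (finrank_mem_assouadSpectrumExponents hθ0 hθ1)

theorem assouadSpectrum_le_upperSpectrum (hθ0 : 0 < θ) (hθ1 : θ < 1) :
    assouadSpectrum θ F ≤ upperSpectrum θ F :=
  csInf_le_csInf bddBelow_assouadSpectrumExponents ⟨_, finrank_mem_upperSpectrumExponents θ F⟩
    (upperSpectrumExponents_subset_assouadSpectrumExponents hθ0 hθ1)

theorem upperSpectrum_mono (hθ0 : 0 < θ) (hθθ' : θ ≤ θ') (hθ'1 : θ' < 1) :
    upperSpectrum θ F ≤ upperSpectrum θ' F :=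
  csInf_le_csInf bddBelow_upperSpectrumExponents ⟨_, finrank_mem_upperSpectrumExponents θ' F⟩
    (upperSpectrumExponents_anti hθ0 hθθ' hθ'1)

theorem interpolation_mem_upperSpectrumExponents (hθ0 : 0 < θ) (hθ1 : θ ≤ 1)
    (ht : t ∈ assouadSpectrumExponents θ F) (htd : t ≤ finrank ℝ E) :
    (1 - θ) * t + θ * finrank ℝ E ∈ upperSpectrumExponents θ F := by
  obtain ⟨ht0, C, hC, hcov⟩ := ht
  refine ⟨by nlinarith, 3 ^ finrank ℝ E * C, by positivity,
    fun r R hr hrR _ hR1 hR0 x _ => ?_⟩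
  have hr1 : r < 1 := hrR.trans_lt (Real.rpow_lt_one hR0.le hR1 (by positivity))
  set ρ := r ^ θ
  have hρ0 : 0 < ρ := Real.rpow_pos_of_pos hr θ
  have hρR : ρ ≤ R := by
    simpa [← Real.rpow_mul hR0.le, hθ0.ne'] using Real.rpow_le_rpow hr.le hrR hθ0.le
  have hρr : ρ ^ (1 / θ) = r := by
    rw [← Real.rpow_mul hr.le, mul_one_div_cancel hθ0.ne', Real.rpow_one]
  obtain ⟨T, hTF, hTcov, hTcard⟩ :=
    exists_finset_subset_cover_card_le (inter_subset_left (t := F)) hρ0 hρR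
  have hpiece : ∀ y ∈ T, (coveringNumber r (closedBall y ρ ∩ F) : ℝ≥0∞)
      ≤ ENNReal.ofReal (C * (ρ / r) ^ t) := fun y hy => by
    simpa only [hρr] using hcov ρ hρ0 (Real.rpow_lt_one hr.le hr1 hθ0) y (hTF hy).2
  have hsplit : closedBall x R ∩ F ⊆ ⋃ y ∈ T, closedBall y ρ ∩ F := fun z hz => by
    obtain ⟨y, hy, hzy⟩ := mem_iUnion₂.mp (hTcov hz)
    exact mem_iUnion₂.mpr ⟨y, hy, hzy, hz.2⟩
  calc (coveringNumber r (closedBall x R ∩ F) : ℝ≥0∞)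
      ≤ ∑ y ∈ T, (coveringNumber r (closedBall y ρ ∩ F) : ℝ≥0∞) := by
        refine (ENat.toENNReal_le.mpr ((coveringNumber_mono_set hsplit).trans
          (coveringNumber_biUnion_le T _))).trans_eq ?_
        exact map_sum ENat.toENNRealRingHom _ _
    _ ≤ T.card * ENNReal.ofReal (C * (ρ / r) ^ t) := by
        simpa using Finset.sum_le_card_nsmul T _ _ hpiece
    _ = ENNReal.ofReal (T.card * (C * (ρ / r) ^ t)) := by
        rw [ENNReal.ofReal_mul (Nat.cast_nonneg _), ENNReal.ofReal_natCast]
    _ ≤ ENNReal.ofReal (3 ^ finrank ℝ E * C * (R / r) ^ ((1 - θ) * t + θ * finrank ℝ E)) := by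
        refine ENNReal.ofReal_le_ofReal ?_
        calc (T.card : ℝ) * (C * (ρ / r) ^ t)
            ≤ 3 ^ finrank ℝ E * (R / ρ) ^ finrank ℝ E * (C * (ρ / r) ^ t) := by gcongr
          _ = 3 ^ finrank ℝ E * C * ((R / ρ) ^ (finrank ℝ E : ℝ) * (ρ / r) ^ t) := by
            rw [Real.rpow_natCast]; ring
          _ ≤ _ := by
            gcongr
            exact Real.div_rpow_mul_div_rpow_le hr hR0 hR1.le hθ1 htd

theorem upperSpectrum_le_interpolation (hθ0 : 0 < θ) (hθ1 : θ < 1) :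
    upperSpectrum θ F ≤ (1 - θ) * assouadSpectrum θ F + θ * finrank ℝ E := by
  have hbound : ∀ t ∈ assouadSpectrumExponents θ F,
      upperSpectrum θ F ≤ (1 - θ) * t + θ * finrank ℝ E := by
    intro t ht
    rcases le_total t (finrank ℝ E) with htd | hdt
    · exact csInf_le bddBelow_upperSpectrumExponents
        (interpolation_mem_upperSpectrumExponents hθ0 hθ1.le ht htd)
    · nlinarith [upperSpectrum_le_finrank (θ := θ) (F := F)]
  have h : (upperSpectrum θ F - θ * finrank ℝ E) / (1 - θ) ≤ assouadSpectrum θ F :=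
    le_csInf ⟨_, finrank_mem_assouadSpectrumExponents hθ0 hθ1⟩ fun t ht => by
      rw [div_le_iff₀ (by linarith)]
      linarith [hbound t ht]
  rw [div_le_iff₀ (by linarith)] at h
  linarith

theorem limsup_assouadSpectrum_le_upperSpectrum (hθ0 : 0 < θ) (hθ1 : θ < 1) :
    limsup (fun θ => assouadSpectrum θ F) (𝓝[>] 0) ≤ upperSpectrum θ F := by
  refine limsup_le_of_le (isCoboundedUnder_le_of_le _ fun _ => assouadSpectrum_nonneg) ?_
  filter_upwards [Ioo_mem_nhdsGT hθ0] with θ' hθ'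
  exact (assouadSpectrum_le_upperSpectrum hθ'.1 (hθ'.2.trans hθ1)).trans
    (upperSpectrum_mono hθ'.1 hθ'.2.le hθ1)

end FiniteDimensional

/-- For every `F ⊆ ℝ^d`, `limsup_{θ→0⁺} dim_A^θ F = lim_{θ→0⁺} \overline{dim}_A^θ F`
(in particular the latter limit exists). -/
theorem upperSpectrum_tendsto_limsup_assouadSpectrum
    (d : ℕ) (F : Set (EuclideanSpace ℝ (Fin d))) :
    Tendsto (fun θ : ℝ => upperSpectrum θ F) (𝓝[>] (0 : ℝ))
      (𝓝 (limsup (fun θ : ℝ => assouadSpectrum θ F) (𝓝[>] (0 : ℝ)))) := by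
  set D : ℝ := (finrank ℝ (EuclideanSpace ℝ (Fin d)) : ℝ)
  have hunit : ∀ᶠ θ in 𝓝[>] (0 : ℝ), θ ∈ Ioo (0 : ℝ) 1 := Ioo_mem_nhdsGT one_pos
  refine tendsto_order.2 ⟨fun c hc => ?_, fun c hc => ?_⟩
  · filter_upwards [hunit] with θ hθ
    exact hc.trans_le (limsup_assouadSpectrum_le_upperSpectrum hθ.1 hθ.2)
  · obtain ⟨c', hLc', hc'c⟩ := exists_between hc
    have hA : ∀ᶠ θ in 𝓝[>] 0, assouadSpectrum θ F < c' :=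
      eventually_lt_of_limsup_lt hLc' <| isBoundedUnder_of_eventually_le <|
        hunit.mono fun θ hθ => assouadSpectrum_le_finrank hθ.1 hθ.2
    have hlin : ∀ᶠ θ in 𝓝[>] 0, (1 - θ) * c' + θ * D < c := by
      have h : Tendsto (fun θ : ℝ => (1 - θ) * c' + θ * D) (𝓝[>] 0) (𝓝 c') :=
        tendsto_nhdsWithin_of_tendsto_nhds <| by
          simpa using (by fun_prop : Continuous fun θ : ℝ => (1 - θ) * c' + θ * D).tendsto 0
      exact h.eventually (gt_mem_nhds hc'c)
    filter_upwards [hunit, hA, hlin] with θ hθ hAθ hlinθ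
    calc upperSpectrum θ F ≤ (1 - θ) * assouadSpectrum θ F + θ * D :=
          upperSpectrum_le_interpolation hθ.1 hθ.2
      _ ≤ (1 - θ) * c' + θ * D := by gcongr; linarith [hθ.2]
      _ < c := hlinθ

end
end

section
/- Let δ_n := n^{−(1+1/(n−1))} for integers n ≥ 2, and let E := ⋃_{n≥2} { n + i·δ_n : i = 0, 1, …, n } ⊆ ℝ. Then the generalized upper box dimension of E equals 1; that is, limsup_{θ→0⁺} dim_A^θ E = 1. -/
open Filter Metric Set Topology Bornology ENNReal

noncomputable section

variable {X : Type*} [PseudoMetricSpace X]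

/-- The set `E = ⋃_{n ≥ 2} {n + i·δ_n : i = 0, …, n}` with `δ_n = n^{-(1 + 1/(n-1))}`. -/
def exampleSetE : Set ℝ :=
  ⋃ n ∈ {n : ℕ | 2 ≤ n},
    {x : ℝ | ∃ i : ℕ, i ≤ n ∧ x = (n : ℝ) + (i : ℝ) * (n : ℝ) ^ (-(1 + 1 / ((n : ℝ) - 1)))}

lemma covNum_le (r : ℝ) (S : Set ℝ) (t : Finset ℝ)
    (h : S ⊆ ⋃ x ∈ t, closedBall x r) : coveringNumber r S ≤ (t.card : ℕ∞) :=
  sInf_le ⟨t, h, rfl⟩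

lemma cover_interval (x R r : ℝ) (hr : 0 < r) (hR : 0 ≤ R) :
    ∃ t : Finset ℝ, (closedBall x R ⊆ ⋃ c ∈ t, closedBall c r) ∧ t.card ≤ ⌈R / r⌉₊ + 1 := by
  set k := ⌈R / r⌉₊ + 1 with hk
  refine ⟨(Finset.range k).image (fun j : ℕ => x - R + (2 * (j : ℝ) + 1) * r), ?_, ?_⟩
  · intro y hy
    rw [mem_closedBall, Real.dist_eq, abs_le] at hy
    set u := y - (x - R) with hu
    have hu0 : 0 ≤ u := by simp only [hu]; linarith [hy.2]
    have hu2 : u ≤ 2 * R := by simp only [hu]; linarith [hy.1]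
    have h2r : (0:ℝ) < 2 * r := by linarith
    set j := min (⌊u / (2 * r)⌋₊) (k - 1) with hj
    have hjk : j ∈ Finset.range k := by
      apply Finset.mem_range.mpr
      have : j ≤ k - 1 := min_le_right _ _
      omega
    refine Set.mem_iUnion₂.mpr ⟨x - R + (2 * (j : ℝ) + 1) * r,
      Finset.mem_image.mpr ⟨j, hjk, rfl⟩, ?_⟩
    rw [mem_closedBall, Real.dist_eq, abs_le]
    have low : 2 * (j : ℝ) * r ≤ u := by
      have h1 : (j : ℝ) ≤ ⌊u / (2 * r)⌋₊ := by
        exact_mod_cast Nat.cast_le.mpr (min_le_left _ _)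
      have h2 : (⌊u / (2 * r)⌋₊ : ℝ) ≤ u / (2 * r) := Nat.floor_le (by positivity)
      have := (le_div_iff₀ h2r).mp (h1.trans h2)
      linarith
    have high : u ≤ 2 * (j : ℝ) * r + 2 * r := by
      rcases le_or_gt (⌊u / (2 * r)⌋₊) (k - 1) with hc | hc
      · have hjf : j = ⌊u / (2 * r)⌋₊ := min_eq_left hc
        have h2 : u / (2 * r) < (⌊u / (2 * r)⌋₊ : ℝ) + 1 := Nat.lt_floor_add_one _
        rw [hjf]
        have := (div_lt_iff₀ h2r).mp h2
        linarith
      · have hjf : j = k - 1 := min_eq_right hc.le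
        have hceil : R / r ≤ (⌈R / r⌉₊ : ℝ) := Nat.le_ceil _
        have hRle : R ≤ (⌈R / r⌉₊ : ℝ) * r := by
          have := (div_le_iff₀ hr).mp hceil; linarith
        have hcast : ((k : ℕ) - 1 : ℕ) = ⌈R / r⌉₊ := by omega
        rw [hjf, hcast]
        linarith
    constructor <;> [skip; skip] <;> simp only [hu] at low high <;> linarith
  · calc ((Finset.range k).image _).card ≤ (Finset.range k).card := Finset.card_image_le
      _ = k := Finset.card_range k

lemma sep_lower (a r : ℝ) (M : ℕ) (S : Set ℝ) (hr : 0 < r)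
    (hp : ∀ i : ℕ, i ≤ M → a + i * r ∈ S)
    (t : Finset ℝ) (ht : S ⊆ ⋃ c ∈ t, closedBall c r) :
    M + 1 ≤ 3 * t.card := by
  classical
  have ha : a ∈ S := by simpa using hp 0 (Nat.zero_le _)
  obtain ⟨c₀, hc₀, -⟩ := Set.mem_iUnion₂.mp (ht ha)
  have hmem : ∀ i : ℕ, ∃ c, c ∈ t ∧ (i ≤ M → a + i * r ∈ closedBall c r) := by
    intro i
    by_cases h : i ≤ M
    · obtain ⟨c, hc, hb⟩ := Set.mem_iUnion₂.mp (ht (hp i h))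
      exact ⟨c, hc, fun _ => hb⟩
    · exact ⟨c₀, hc₀, fun h' => absurd h' h⟩
  choose f hft hfb using hmem
  have key := Finset.card_le_mul_card_image_of_maps_to
    (f := f) (s := Finset.range (M + 1)) (t := t)
    (fun i hi => hft i) 3 ?_
  · simpa [Finset.card_range, Nat.mul_comm] using key
  · intro c hc
    set F := (Finset.range (M + 1)).filter (fun i => f i = c) with hF
    rcases F.eq_empty_or_nonempty with he | hne
    · simp [← hF, he]
    · have hm := F.min'_mem hne
      set m := F.min' hne with hm'
      have hsub : F ⊆ Finset.Icc m (m + 2) := by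
        intro i hi
        have h1 : m ≤ i := F.min'_le i hi
        have hiM : i ≤ M := by
          have := (Finset.mem_filter.mp hi).1
          rw [Finset.mem_range] at this; omega
        have hmM : m ≤ M := by
          have := (Finset.mem_filter.mp hm).1
          rw [Finset.mem_range] at this; omega
        have hfi : f i = c := (Finset.mem_filter.mp hi).2
        have hfm : f m = c := (Finset.mem_filter.mp hm).2
        have hbi : |a + (i : ℝ) * r - c| ≤ r := by
          have := hfb i hiM; rw [hfi, mem_closedBall, Real.dist_eq] at this; exact this
        have hbm : |a + (m : ℝ) * r - c| ≤ r := by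
          have := hfb m hmM; rw [hfm, mem_closedBall, Real.dist_eq] at this; exact this
        have h2 : (i : ℝ) ≤ (m : ℝ) + 2 := by
          rcases abs_le.mp hbi with ⟨hi1, hi2⟩
          rcases abs_le.mp hbm with ⟨hm1, hm2⟩
          nlinarith
        have : i ≤ m + 2 := by exact_mod_cast h2
        exact Finset.mem_Icc.mpr ⟨h1, this⟩
      calc F.card ≤ (Finset.Icc m (m + 2)).card := Finset.card_le_card hsub
        _ = 3 := by rw [Nat.card_Icc]; omega

lemma covNum_lower (r : ℝ) (S : Set ℝ) (a : ℝ) (M : ℕ) (y : ℝ) (hr : 0 < r) (hy : 0 ≤ y)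
    (hp : ∀ i : ℕ, i ≤ M → a + i * r ∈ S)
    (hle : (coveringNumber r S : ℝ≥0∞) ≤ ENNReal.ofReal y) :
    (M : ℝ) + 1 ≤ 3 * y := by
  set k : ℕ := (M + 3) / 3 with hk
  have hkle : (k : ℕ∞) ≤ coveringNumber r S := by
    apply le_sInf
    rintro n ⟨t, hcov, rfl⟩
    have h3 : M + 1 ≤ 3 * t.card := sep_lower a r M S hr hp t hcov
    have : k ≤ t.card := by omega
    exact_mod_cast this
  have hkle' : (k : ℝ≥0∞) ≤ ENNReal.ofReal y := by
    calc (k : ℝ≥0∞) = ((k : ℕ∞) : ℝ≥0∞) := by exact_mod_cast rfl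
      _ ≤ (coveringNumber r S : ℝ≥0∞) := by exact_mod_cast hkle
      _ ≤ ENNReal.ofReal y := hle
  have hky : (k : ℝ) ≤ y := by
    rw [← ENNReal.ofReal_natCast] at hkle'
    exact (ENNReal.ofReal_le_ofReal_iff hy).mp hkle'
  have h3k : M + 1 ≤ 3 * k := by omega
  have : (M : ℝ) + 1 ≤ 3 * (k : ℝ) := by exact_mod_cast h3k
  linarith

lemma mem_E (n i : ℕ) (hn : 2 ≤ n) (hi : i ≤ n) :
    (n : ℝ) + (i : ℝ) * (n : ℝ) ^ (-(1 + 1 / ((n : ℝ) - 1))) ∈ exampleSetE := by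
  apply Set.mem_biUnion (show n ∈ {n : ℕ | 2 ≤ n} from hn)
  exact ⟨i, hi, rfl⟩

lemma spectrum_eq_one {θ : ℝ} (h0 : 0 < θ) (h1 : θ < 1) :
    assouadSpectrum θ exampleSetE = 1 := by
  have hθ1 : 1 ≤ 1 / θ := by rw [le_div_iff₀ h0]; linarith
  have h1A : (1 : ℝ) ∈ {s : ℝ | 0 ≤ s ∧ ∃ C > (0 : ℝ), ∀ R : ℝ, 0 < R → R < 1 →
      ∀ x ∈ exampleSetE, (coveringNumber (R ^ (1 / θ)) (closedBall x R ∩ exampleSetE) : ℝ≥0∞)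
        ≤ ENNReal.ofReal (C * (R / R ^ (1 / θ)) ^ (1:ℝ))} := by
    refine ⟨zero_le_one, 3, by norm_num, ?_⟩
    intro R hR0 hR1 x hx
    set r := R ^ (1 / θ) with hrdef
    have hr0 : 0 < r := Real.rpow_pos_of_pos hR0 _
    have hrR : r ≤ R := by
      have := Real.rpow_le_rpow_of_exponent_ge hR0 hR1.le hθ1
      rwa [Real.rpow_one] at this
    have hquot : 1 ≤ R / r := (one_le_div hr0).mpr hrR
    obtain ⟨t, hcov, hcard⟩ := cover_interval x R r hr0 hR0.le
    have h1 : coveringNumber r (closedBall x R ∩ exampleSetE) ≤ (t.card : ℕ∞) :=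
      covNum_le r _ t ((Set.inter_subset_left).trans hcov)
    have h2 : (t.card : ℝ) ≤ 3 * (R / r) := by
      have hceil : (⌈R / r⌉₊ : ℝ) < R / r + 1 := Nat.ceil_lt_add_one (by positivity)
      have : (t.card : ℝ) ≤ (⌈R / r⌉₊ : ℝ) + 1 := by exact_mod_cast hcard
      linarith
    calc (coveringNumber r (closedBall x R ∩ exampleSetE) : ℝ≥0∞)
        ≤ ((t.card : ℕ∞) : ℝ≥0∞) := by exact_mod_cast h1
      _ = ENNReal.ofReal (t.card : ℝ) := by
          simp [ENNReal.ofReal_natCast]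
      _ ≤ ENNReal.ofReal (3 * (R / r) ^ (1:ℝ)) := by
          apply ENNReal.ofReal_le_ofReal; rwa [Real.rpow_one]
  have hlb : ∀ s ∈ {s : ℝ | 0 ≤ s ∧ ∃ C > (0 : ℝ), ∀ R : ℝ, 0 < R → R < 1 →
      ∀ x ∈ exampleSetE, (coveringNumber (R ^ (1 / θ)) (closedBall x R ∩ exampleSetE) : ℝ≥0∞)
        ≤ ENNReal.ofReal (C * (R / R ^ (1 / θ)) ^ s)}, (1:ℝ) ≤ s := by
    rintro s ⟨hs0, C, hC, hyp⟩
    by_contra hs1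
    push_neg at hs1
    set e' : ℝ := (1 - θ) * (1 - s) with he'
    have he'0 : 0 < e' := mul_pos (by linarith) (by linarith)
    obtain ⟨n, hn⟩ := exists_nat_gt (max (max 2 (2 / θ)) ((3 * C + 1) ^ (1 / e')))
    have hn2R : (2 : ℝ) ≤ n := le_of_lt (lt_of_le_of_lt (le_max_left _ _ |>.trans (le_max_left _ _)) hn)
    have hn2 : 2 ≤ n := by exact_mod_cast hn2R
    have hnθ : 1 < θ * n := by
      have h2θ : 2 / θ < n := lt_of_le_of_lt ((le_max_right _ _).trans (le_max_left _ _)) hn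
      have := (div_lt_iff₀ h0).mp h2θ
      nlinarith
    have hbig : 3 * C < (n : ℝ) ^ e' := by
      have hb : (3 * C + 1) ^ (1 / e') < n := lt_of_le_of_lt (le_max_right _ _) hn
      have h1' : ((3 * C + 1) ^ (1 / e')) ^ e' ≤ (n : ℝ) ^ e' :=
        Real.rpow_le_rpow (by positivity) hb.le he'0.le
      rw [← Real.rpow_mul (by positivity), one_div_mul_cancel he'0.ne', Real.rpow_one] at h1'
      linarith
    -- set up the scales
    set w : ℝ := (n : ℝ) - 1 with hw
    have hw1 : 1 ≤ w := by simp only [hw]; linarith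
    have hw0 : 0 < w := by linarith
    set ee : ℝ := 1 + 1 / w with hee
    have hee1 : 1 ≤ ee := by
      have : 0 ≤ 1 / w := by positivity
      simp only [hee]; linarith
    have hee0 : 0 < ee := by linarith
    set δ : ℝ := (n : ℝ) ^ (-ee) with hδ
    have hn1R : (1 : ℝ) < n := by linarith
    have hδ0 : 0 < δ := Real.rpow_pos_of_pos (by linarith) _
    have hδ1 : δ < 1 := Real.rpow_lt_one_of_one_lt_of_neg hn1R (by linarith)
    set R : ℝ := δ ^ θ with hR
    have hR0 : 0 < R := Real.rpow_pos_of_pos hδ0 _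
    have hR1 : R < 1 := Real.rpow_lt_one hδ0.le hδ1 h0
    have hrδ : R ^ (1 / θ) = δ := by
      rw [hR, ← Real.rpow_mul hδ0.le, mul_one_div_cancel h0.ne', Real.rpow_one]
    set x : ℝ := δ ^ (θ - 1) with hxdef
    have hx0 : 0 < x := Real.rpow_pos_of_pos hδ0 _
    have hxquot : R / δ = x := by
      rw [hR, hxdef]
      rw [show θ - 1 = θ - 1 from rfl, Real.rpow_sub hδ0, Real.rpow_one]
    have hx_eq : x = (n : ℝ) ^ (ee * (1 - θ)) := by
      rw [hxdef, hδ, ← Real.rpow_mul (by positivity : (0:ℝ) ≤ (n:ℝ))]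
      ring_nf
    have hx_ge : (n : ℝ) ^ (1 - θ) ≤ x := by
      rw [hx_eq]
      apply Real.rpow_le_rpow_of_exponent_le hn1R.le
      nlinarith
    have hx_lt_n : x < n := by
      rw [hx_eq]
      have hlt : ee * (1 - θ) < 1 := by
        have hinv : (1 / w) * w = 1 := one_div_mul_cancel hw0.ne'
        have hwp : (0:ℝ) < 1 / w := by positivity
        have hn_eq : (n : ℝ) = w + 1 := by simp only [hw]; ring
        rw [hee]
        nlinarith [hnθ, hn_eq]
      have := Real.rpow_lt_rpow_of_exponent_lt hn1R hlt
      rwa [Real.rpow_one] at this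
    set M : ℕ := ⌊x⌋₊ with hM
    have hMx : (M : ℝ) ≤ x := Nat.floor_le hx0.le
    have hxM1 : x < (M : ℝ) + 1 := Nat.lt_floor_add_one x
    have hMn : M < n := by exact_mod_cast hMx.trans_lt hx_lt_n
    have hpts : ∀ i : ℕ, i ≤ M → (n : ℝ) + (i : ℝ) * δ ∈ closedBall (n : ℝ) R ∩ exampleSetE := by
      intro i hi
      constructor
      · rw [mem_closedBall, Real.dist_eq]
        have hiR : (i : ℝ) ≤ x := (Nat.cast_le.mpr hi).trans hMx
        have h1' : (i : ℝ) * δ ≤ x * δ := mul_le_mul_of_nonneg_right hiR hδ0.le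
        have h2' : x * δ = R := by
          rw [hxdef, hR, Real.rpow_sub hδ0, Real.rpow_one]
          field_simp
        have : |(i : ℝ) * δ| = (i : ℝ) * δ := abs_of_nonneg (by positivity)
        rw [show (n : ℝ) + (i : ℝ) * δ - (n : ℝ) = (i : ℝ) * δ by ring, this]
        linarith
      · exact mem_E n i hn2 (le_of_lt (lt_of_le_of_lt hi hMn))
    have hnE : (n : ℝ) ∈ exampleSetE := by
      have := mem_E n 0 hn2 (Nat.zero_le n)
      simpa using this
    have hcov := hyp R hR0 hR1 (n : ℝ) hnE
    rw [hrδ, hxquot] at hcov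
    have hy0 : 0 ≤ C * x ^ s := by positivity
    have hmain : (M : ℝ) + 1 ≤ 3 * (C * x ^ s) :=
      covNum_lower δ _ (n : ℝ) M _ hδ0 hy0 hpts hcov
    -- derive x ^ (1 - s) < 3 C
    have hxs0 : (0:ℝ) < x ^ s := Real.rpow_pos_of_pos hx0 _
    have hfin : x ^ (1 - s) < 3 * C := by
      have h1' : x < 3 * C * x ^ s := by linarith
      have h2' : x ^ (1 - s) = x / x ^ s := by
        rw [Real.rpow_sub hx0, Real.rpow_one]
      rw [h2', div_lt_iff₀ hxs0]
      linarith
    have hge : (n : ℝ) ^ e' ≤ x ^ (1 - s) := by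
      have := Real.rpow_le_rpow (by positivity) hx_ge (by linarith : (0:ℝ) ≤ 1 - s)
      rwa [← Real.rpow_mul (by positivity : (0:ℝ) ≤ (n:ℝ)), ← he'] at this
    linarith
  have hbdd : BddBelow {s : ℝ | 0 ≤ s ∧ ∃ C > (0 : ℝ), ∀ R : ℝ, 0 < R → R < 1 →
      ∀ x ∈ exampleSetE, (coveringNumber (R ^ (1 / θ)) (closedBall x R ∩ exampleSetE) : ℝ≥0∞)
        ≤ ENNReal.ofReal (C * (R / R ^ (1 / θ)) ^ s)} := ⟨0, fun s hs => hs.1⟩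
  exact le_antisymm (csInf_le hbdd h1A) (le_csInf ⟨1, h1A⟩ hlb)

/-- The generalized upper box dimension of `E` equals `1`. -/
theorem genUpperBoxDim_exampleSetE : genUpperBoxDim exampleSetE = 1 := by
  unfold genUpperBoxDim
  have h : (fun θ : ℝ => assouadSpectrum θ exampleSetE) =ᶠ[𝓝[>] (0:ℝ)] fun _ => (1:ℝ) := by
    filter_upwards [Ioo_mem_nhdsGT_of_mem (by norm_num : (0:ℝ) ∈ Ico (0:ℝ) 1)] with θ hθ
    exact spectrum_eq_one hθ.1 hθ.2
  rw [Filter.limsup_congr h, Filter.limsup_const]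

end
end

section
/- Let δ_n := n^{−(1+1/(n−1))} for integers n ≥ 2, and let E := ⋃_{n≥2} { n + i·δ_n : i = 0, 1, …, n } ⊆ ℝ. Then lim_{R→+∞} \overline{dim}_B (B(O,R) ∩ E) = 0, where B(O,R) is the closed ball of radius R centred at the origin; in particular \overline{dim}_{GB}^* E = 0 < 1 = \overline{dim}_{GB} E, so the quantity \overline{dim}_{GB}^* can be strictly smaller than the generalized upper box dimension. -/
open Filter Metric Set Topology Bornology ENNReal

noncomputable section

variable {X : Type*} [PseudoMetricSpace X]

/-! ### Auxiliary lemmas -/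

lemma coveringNumber_mono' {r : ℝ} {E F : Set X} (h : E ⊆ F) :
    coveringNumber r E ≤ coveringNumber r F := by
  apply sInf_le_sInf
  rintro n ⟨t, ht, hc⟩
  exact ⟨t, h.trans ht, hc⟩

lemma coveringNumber_le_card' {r : ℝ} (hr : 0 ≤ r) {F : Set X} (hF : F.Finite) :
    coveringNumber r F ≤ (hF.toFinset.card : ℕ∞) := by
  apply sInf_le
  refine ⟨hF.toFinset, fun x hx => ?_, rfl⟩
  exact Set.mem_biUnion (hF.mem_toFinset.2 hx) (Metric.mem_closedBall_self hr)

lemma coveringNumber_Icc_le' {r a b : ℝ} (hr : 0 < r) :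
    coveringNumber r (Set.Icc a b) ≤ ((⌊(b - a) / (2*r)⌋₊ + 1 : ℕ) : ℕ∞) := by
  have h2r : 0 < 2*r := by linarith
  set N := ⌊(b - a) / (2*r)⌋₊ + 1 with hN
  have hcov : Set.Icc a b ⊆
      ⋃ x ∈ (Finset.range N).image (fun k : ℕ => a + r + 2*r*k), closedBall x r := by
    intro y hy
    set k := ⌊(y - a) / (2*r)⌋₊ with hk
    have hy0 : 0 ≤ (y - a) / (2*r) := by
      apply div_nonneg _ h2r.le; linarith [hy.1]
    have hk1 : (k:ℝ) ≤ (y - a)/(2*r) := Nat.floor_le hy0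
    have hk2 : (y - a)/(2*r) < k + 1 := Nat.lt_floor_add_one _
    have hkN : k < N := by
      have hle : (y - a)/(2*r) ≤ (b - a)/(2*r) := by
        apply div_le_div_of_nonneg_right (by linarith [hy.2]) h2r.le
      exact Nat.lt_succ_of_le (Nat.floor_mono hle)
    refine Set.mem_biUnion (Finset.mem_image.2 ⟨k, Finset.mem_range.2 hkN, rfl⟩) ?_
    rw [Metric.mem_closedBall, Real.dist_eq, abs_le]
    have hl : (k:ℝ) * (2*r) ≤ y - a := (le_div_iff₀ h2r).1 hk1
    have hu : y - a < ((k:ℝ)+1) * (2*r) := (div_lt_iff₀ h2r).1 hk2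
    constructor <;> nlinarith
  calc coveringNumber r (Set.Icc a b)
      ≤ (((Finset.range N).image (fun k : ℕ => a + r + 2*r*k)).card : ℕ∞) :=
        sInf_le ⟨_, hcov, rfl⟩
    _ ≤ (N : ℕ∞) := by
        exact_mod_cast (Finset.card_image_le.trans (by simp))

lemma prog_card_le' {c δ : ℝ} (hδ : 0 < δ) {m : ℕ} {t : Finset ℝ}
    (ht : {x : ℝ | ∃ i : ℕ, i ≤ m ∧ x = c + i * δ} ⊆ ⋃ x ∈ t, closedBall x δ) :
    m + 1 ≤ 3 * t.card := by
  classical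
  have hex : ∀ i : ℕ, i ≤ m → ∃ b, b ∈ t ∧ dist (c + i*δ) b ≤ δ := by
    intro i hi
    have h := ht (show (c + i*δ) ∈ _ from ⟨i, hi, rfl⟩)
    simpa [Set.mem_iUnion, Metric.mem_closedBall] using h
  set f : ℕ → ℝ := fun i => if h : ∃ b, b ∈ t ∧ dist (c + i*δ) b ≤ δ then h.choose else 0 with hf
  have hmaps : ∀ i ∈ Finset.range (m+1), f i ∈ t := by
    intro i hi
    have h := hex i (Nat.lt_succ_iff.1 (Finset.mem_range.1 hi))
    simp only [hf, dif_pos h]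
    exact h.choose_spec.1
  have hfiber : ∀ b ∈ t, ((Finset.range (m+1)).filter (fun i => f i = b)).card ≤ 3 := by
    intro b hb
    set F := (Finset.range (m+1)).filter (fun i => f i = b) with hF
    have hdist : ∀ i ∈ F, dist (c + i*δ) b ≤ δ := by
      intro i hiF
      rcases Finset.mem_filter.1 hiF with ⟨hir, hfi⟩
      have h := hex i (Nat.lt_succ_iff.1 (Finset.mem_range.1 hir))
      have hch : f i = h.choose := by simp only [hf, dif_pos h]
      rw [← hfi, hch]
      exact h.choose_spec.2
    rcases F.eq_empty_or_nonempty with hFe | hFne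
    · simp [hFe]
    · have hsub : F ⊆ Finset.Icc (F.min' hFne) (F.min' hFne + 2) := by
        intro j hj
        refine Finset.mem_Icc.2 ⟨F.min'_le j hj, ?_⟩
        have h1 := hdist _ (F.min'_mem hFne)
        have h2 := hdist j hj
        rw [Real.dist_eq, abs_le] at h1 h2
        have hr : (j:ℝ) ≤ ((F.min' hFne : ℕ):ℝ) + 2 := by
          have hml : (j:ℝ) * δ ≤ (((F.min' hFne : ℕ):ℝ) + 2) * δ := by nlinarith
          exact le_of_mul_le_mul_right hml hδ
        exact_mod_cast hr
      calc F.card ≤ (Finset.Icc (F.min' hFne) (F.min' hFne + 2)).card :=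
            Finset.card_le_card hsub
        _ = 3 := by rw [Nat.card_Icc]; omega
  have h := Finset.card_le_mul_card_image_of_maps_to hmaps 3 hfiber
  simpa using h

lemma upperBoxDim_of_finite' {F : Set X} (hF : F.Finite) : upperBoxDim F = 0 := by
  set k := hF.toFinset.card with hk
  have key : Tendsto (fun δ : ℝ =>
      Real.log ((coveringNumber δ F).toNat : ℝ) / (- Real.log δ)) (𝓝[>] (0:ℝ)) (𝓝 0) := by
    have hupper : Tendsto (fun δ : ℝ => Real.log ((k:ℝ)+1) / (- Real.log δ)) (𝓝[>] (0:ℝ)) (𝓝 0) :=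
      tendsto_const_nhds.div_atTop
        (tendsto_neg_atBot_atTop.comp Real.tendsto_log_nhdsGT_zero)
    refine tendsto_of_tendsto_of_tendsto_of_le_of_le' tendsto_const_nhds hupper ?_ ?_
    all_goals
      filter_upwards [Ioo_mem_nhdsGT_of_mem (show (0:ℝ) ∈ Set.Ico (0:ℝ) 1 by norm_num)] with δ hδ
    all_goals
      have hlog : 0 < - Real.log δ := by
        have := Real.log_neg hδ.1 hδ.2; linarith
      have hnum0 : 0 ≤ Real.log ((coveringNumber δ F).toNat : ℝ) := by
        rcases Nat.eq_zero_or_pos (coveringNumber δ F).toNat with h | h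
        · simp [h]
        · exact Real.log_nonneg (by exact_mod_cast h)
    · exact div_nonneg hnum0 hlog.le
    · apply div_le_div_of_nonneg_right _ hlog.le
      have hle : (coveringNumber δ F).toNat ≤ k := by
        have h1 : coveringNumber δ F ≤ (k:ℕ∞) := coveringNumber_le_card' hδ.1.le hF
        have h2 := ENat.toNat_le_toNat h1 (by simp)
        simpa using h2
      rcases Nat.eq_zero_or_pos (coveringNumber δ F).toNat with h | h
      · simp [h]
        exact Real.log_nonneg (by linarith [Nat.cast_nonneg (α := ℝ) k])
      · apply Real.log_le_log (by exact_mod_cast h)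
        have : ((coveringNumber δ F).toNat : ℝ) ≤ (k:ℝ) := by exact_mod_cast hle
        linarith
  exact key.limsup_eq

lemma finite_ball_inter_exampleSetE (R : ℝ) :
    (Metric.closedBall (0:ℝ) R ∩ exampleSetE).Finite := by
  apply Set.Finite.subset (s := ⋃ n ∈ Finset.range (⌊R⌋₊ + 1),
    {x : ℝ | ∃ i : ℕ, i ≤ n ∧ x = (n : ℝ) + (i : ℝ) * (n : ℝ) ^ (-(1 + 1 / ((n : ℝ) - 1)))})
  · apply Set.Finite.biUnion (Finset.range (⌊R⌋₊+1)).finite_toSet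
    intro n _
    have himg : {x : ℝ | ∃ i : ℕ, i ≤ n ∧ x = (n : ℝ) + (i : ℝ) * (n : ℝ) ^ (-(1 + 1 / ((n : ℝ) - 1)))}
        = (fun i : ℕ => (n : ℝ) + (i : ℝ) * (n : ℝ) ^ (-(1 + 1 / ((n : ℝ) - 1)))) '' (Set.Iic n) := by
      ext x
      constructor
      · rintro ⟨i, hi, h⟩; exact ⟨i, hi, h.symm⟩
      · rintro ⟨i, hi, h⟩; exact ⟨i, hi, h.symm⟩
    rw [himg]
    exact (Set.finite_Iic n).image _
  · rintro x ⟨hxball, hxE⟩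
    rcases Set.mem_iUnion₂.1 hxE with ⟨n, hn2, hxblock⟩
    obtain ⟨i, hi, rfl⟩ := hxblock
    refine Set.mem_biUnion ?_ ⟨i, hi, rfl⟩
    have hδ : (0:ℝ) ≤ (n:ℝ) ^ (-(1 + 1 / ((n:ℝ) - 1))) := Real.rpow_nonneg (Nat.cast_nonneg n) _
    have hxR : ((n:ℝ)) ≤ R := by
      rw [Metric.mem_closedBall, Real.dist_eq, sub_zero] at hxball
      have h1 := (abs_le.1 hxball).2
      nlinarith [Nat.cast_nonneg (α := ℝ) i]
    exact Finset.mem_range.2 (Nat.lt_succ_of_le (Nat.le_floor hxR))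

lemma one_mem_spectrumSet (θ : ℝ) (hθ0 : 0 < θ) (hθ1 : θ < 1) :
    (1:ℝ) ∈ {s : ℝ | 0 ≤ s ∧ ∃ C > (0 : ℝ), ∀ R : ℝ, 0 < R → R < 1 → ∀ x ∈ exampleSetE,
      (coveringNumber (R ^ (1 / θ)) (closedBall x R ∩ exampleSetE) : ℝ≥0∞)
        ≤ ENNReal.ofReal (C * (R / R ^ (1 / θ)) ^ (1:ℝ))} := by
  refine ⟨zero_le_one, 2, by norm_num, fun R hR0 hR1 x hx => ?_⟩
  set r := R ^ (1/θ) with hr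
  have hrpos : 0 < r := Real.rpow_pos_of_pos hR0 _
  have hrR : r ≤ R := by
    have h1 : R ^ (1/θ) ≤ R ^ (1:ℝ) :=
      Real.rpow_le_rpow_of_exponent_ge hR0 hR1.le (by
        rw [le_div_iff₀ hθ0]; linarith)
    rwa [Real.rpow_one] at h1
  have hball : closedBall x R ∩ exampleSetE ⊆ Set.Icc (x - R) (x + R) := by
    intro y hy
    have h := hy.1
    rw [Metric.mem_closedBall, Real.dist_eq] at h
    have h2 := abs_le.1 h
    exact ⟨by linarith [h2.1], by linarith [h2.2]⟩
  have hmono := (coveringNumber_mono' (r := r) hball).trans (coveringNumber_Icc_le' hrpos)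
  set N := ⌊(x + R - (x - R)) / (2*r)⌋₊ + 1 with hN
  have hRr1 : (1:ℝ) ≤ R / r := (one_le_div hrpos).2 hrR
  have hNle : (N:ℝ) ≤ 2 * (R / r) := by
    have h2R : (x + R - (x - R)) / (2*r) = R / r := by
      rw [show x + R - (x - R) = 2*R by ring, mul_div_mul_left _ _ (two_ne_zero)]
    have h1 : (⌊(x + R - (x - R)) / (2*r)⌋₊ : ℝ) ≤ R / r := by
      rw [← h2R]
      exact Nat.floor_le (by rw [h2R]; positivity)
    push_cast [hN]
    linarith
  calc (coveringNumber r (closedBall x R ∩ exampleSetE) : ℝ≥0∞)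
      ≤ ((N : ℕ∞) : ℝ≥0∞) := by exact_mod_cast hmono
    _ = ENNReal.ofReal (N:ℝ) := by
        rw [ENNReal.ofReal_natCast]; exact_mod_cast rfl
    _ ≤ ENNReal.ofReal (2 * (R / r) ^ (1:ℝ)) :=
        ENNReal.ofReal_le_ofReal (by rw [Real.rpow_one]; exact hNle)

lemma lower_spectrumSet (θ : ℝ) (hθ0 : 0 < θ) (hθ1 : θ < 1) (s : ℝ)
    (C : ℝ) (hC : 0 < C)
    (H : ∀ R : ℝ, 0 < R → R < 1 → ∀ x ∈ exampleSetE,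
      (coveringNumber (R ^ (1 / θ)) (closedBall x R ∩ exampleSetE) : ℝ≥0∞)
        ≤ ENNReal.ofReal (C * (R / R ^ (1 / θ)) ^ s)) : 1 ≤ s := by
  by_contra hlt
  push_neg at hlt
  have hev : ∀ᶠ n : ℕ in atTop, 2 ≤ n ∧ 1 ≤ θ * n ∧ 3*C < (n:ℝ) ^ ((1-θ)*(1-s)) := by
    have e1 : ∀ᶠ n : ℕ in atTop, 2 ≤ n := eventually_ge_atTop 2
    have e2 : ∀ᶠ n : ℕ in atTop, 1 ≤ θ * n := by
      have ht : Tendsto (fun n : ℕ => θ * (n:ℝ)) atTop atTop :=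
        (tendsto_natCast_atTop_atTop (R := ℝ)).const_mul_atTop hθ0
      exact ht.eventually_ge_atTop 1
    have e3 : ∀ᶠ n : ℕ in atTop, 3*C < (n:ℝ) ^ ((1-θ)*(1-s)) := by
      have hpos : 0 < (1-θ)*(1-s) := by nlinarith
      exact ((tendsto_rpow_atTop hpos).comp
        (tendsto_natCast_atTop_atTop (R := ℝ))).eventually_gt_atTop (3*C)
    filter_upwards [e1, e2, e3] with n h1 h2 h3
    exact ⟨h1, h2, h3⟩
  obtain ⟨n, h2, hθn, hKC⟩ := hev.exists
  set e : ℝ := -(1 + 1/((n:ℝ)-1)) with he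
  set δ : ℝ := (n:ℝ) ^ e with hδdef
  have hn2 : (2:ℝ) ≤ (n:ℝ) := by exact_mod_cast h2
  have hn1 : (1:ℝ) < n := by linarith
  have hu : (0:ℝ) < (n:ℝ) - 1 := by linarith
  have hne : e < 0 := by
    have : 0 < 1/((n:ℝ)-1) := by positivity
    rw [he]; linarith
  have hδpos : 0 < δ := Real.rpow_pos_of_pos (by linarith) _
  have hδlt1 : δ < 1 := Real.rpow_lt_one_of_one_lt_of_neg hn1 hne
  set R : ℝ := δ ^ θ with hRdef
  have hR0 : 0 < R := Real.rpow_pos_of_pos hδpos θ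
  have hR1 : R < 1 := Real.rpow_lt_one hδpos.le hδlt1 hθ0
  have hxE : (n:ℝ) ∈ exampleSetE := by
    refine Set.mem_biUnion (show n ∈ {n : ℕ | 2 ≤ n} from h2) ?_
    exact ⟨0, Nat.zero_le n, by simp⟩
  have hrδ : R ^ (1/θ) = δ := by
    rw [hRdef, ← Real.rpow_mul hδpos.le, mul_one_div_cancel hθ0.ne', Real.rpow_one]
  set K : ℝ := δ ^ (θ - 1) with hKdef
  have hKpos : 0 < K := Real.rpow_pos_of_pos hδpos _
  have hRdiv : R / δ = K := by
    rw [hKdef, Real.rpow_sub hδpos, Real.rpow_one, hRdef]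
  have hKn : K = (n:ℝ) ^ (e*(θ-1)) := by
    rw [hKdef, hδdef, ← Real.rpow_mul (by linarith : (0:ℝ) ≤ (n:ℝ))]
  have hexp : e*(θ-1) = (1 + 1/((n:ℝ)-1))*(1-θ) := by rw [he]; ring
  have hKn_le : K ≤ (n:ℝ) := by
    have hle1 : (1 + 1/((n:ℝ)-1))*(1-θ) ≤ 1 := by
      have hd : (1-θ)/((n:ℝ)-1) ≤ θ := by
        rw [div_le_iff₀ hu]
        nlinarith
      have expand : (1 + 1/((n:ℝ)-1))*(1-θ) = (1-θ) + (1-θ)/((n:ℝ)-1) := by ring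
      linarith [expand ▸ le_refl ((1 + 1/((n:ℝ)-1))*(1-θ)), expand.le]
    calc K = (n:ℝ) ^ (e*(θ-1)) := hKn
      _ ≤ (n:ℝ) ^ (1:ℝ) :=
          Real.rpow_le_rpow_of_exponent_le hn1.le (by rw [hexp]; exact hle1)
      _ = (n:ℝ) := Real.rpow_one _
  have hKge : (n:ℝ) ^ (1-θ) ≤ K := by
    rw [hKn]
    apply Real.rpow_le_rpow_of_exponent_le hn1.le
    rw [hexp]
    have h1u : 0 ≤ 1/((n:ℝ)-1) := by positivity
    nlinarith
  set m : ℕ := ⌊K⌋₊ with hm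
  have hmn : m ≤ n := by
    have := Nat.floor_mono hKn_le
    simpa using this
  have hmK : (m:ℝ) ≤ K := Nat.floor_le hKpos.le
  have hKm1 : K ≤ (m:ℝ) + 1 := (Nat.lt_floor_add_one K).le
  have hPsub : {x : ℝ | ∃ i : ℕ, i ≤ m ∧ x = (n:ℝ) + i * δ} ⊆
      closedBall (n:ℝ) R ∩ exampleSetE := by
    rintro x ⟨i, hi, rfl⟩
    constructor
    · rw [Metric.mem_closedBall, Real.dist_eq]
      have hiK : (i:ℝ) ≤ K := le_trans (by exact_mod_cast hi) hmK
      have h1 : (i:ℝ)*δ ≤ K*δ := mul_le_mul_of_nonneg_right hiK hδpos.le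
      have h2 : K*δ = R := by
        rw [← hRdiv]; field_simp
      have h0 : (n:ℝ) + i*δ - n = i*δ := by ring
      rw [h0, abs_of_nonneg (by positivity)]
      linarith
    · exact Set.mem_biUnion (show n ∈ {n : ℕ | 2 ≤ n} from h2)
        ⟨i, hi.trans hmn, by rw [hδdef, he]⟩
  set N : ℕ := (m+3)/3 with hNdef
  have hNle : ((N:ℕ∞)) ≤ coveringNumber δ {x : ℝ | ∃ i : ℕ, i ≤ m ∧ x = (n:ℝ) + i * δ} := by
    apply le_sInf
    rintro b ⟨t, ht, rfl⟩
    have h3 := prog_card_le' hδpos ht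
    exact_mod_cast (by omega : N ≤ t.card)
  have Hn := H R hR0 hR1 (n:ℝ) hxE
  rw [hrδ, hRdiv] at Hn
  have hchain : ((N:ℝ≥0∞)) ≤ ENNReal.ofReal (C * K ^ s) := by
    calc ((N:ℝ≥0∞)) = (((N:ℕ∞)):ℝ≥0∞) := by exact_mod_cast rfl
      _ ≤ (coveringNumber δ {x : ℝ | ∃ i : ℕ, i ≤ m ∧ x = (n:ℝ) + i * δ} : ℝ≥0∞) := by
          exact_mod_cast hNle
      _ ≤ (coveringNumber δ (closedBall (n:ℝ) R ∩ exampleSetE) : ℝ≥0∞) := by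
          exact_mod_cast coveringNumber_mono' hPsub
      _ ≤ _ := Hn
  have hNreal : (N:ℝ) ≤ C * K ^ s := by
    rw [← ENNReal.ofReal_natCast] at hchain
    exact (ENNReal.ofReal_le_ofReal_iff (by positivity)).1 hchain
  have hKN : K ≤ 3*(N:ℝ) := by
    have h3 : (m:ℝ) + 1 ≤ 3*(N:ℝ) := by exact_mod_cast (by omega : m + 1 ≤ 3*N)
    linarith
  have hKC' : K ≤ 3*C*K^s := by nlinarith
  have hKs : K ^ ((1:ℝ) - s) ≤ 3*C := by
    rw [Real.rpow_sub hKpos, Real.rpow_one, div_le_iff₀ (Real.rpow_pos_of_pos hKpos s)]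
    linarith
  have hfin : (n:ℝ) ^ ((1-θ)*(1-s)) ≤ K ^ ((1:ℝ)-s) := by
    rw [Real.rpow_mul (by linarith : (0:ℝ) ≤ (n:ℝ))]
    exact Real.rpow_le_rpow (by positivity) hKge (by linarith)
  linarith

lemma assouadSpectrum_exampleSetE (θ : ℝ) (hθ0 : 0 < θ) (hθ1 : θ < 1) :
    assouadSpectrum θ exampleSetE = 1 := by
  rw [assouadSpectrum]
  apply le_antisymm
  · exact csInf_le ⟨0, fun s hs => hs.1⟩ (one_mem_spectrumSet θ hθ0 hθ1)
  · refine le_csInf ⟨1, one_mem_spectrumSet θ hθ0 hθ1⟩ ?_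
    rintro s ⟨hs0, C, hC, H⟩
    exact lower_spectrumSet θ hθ0 hθ1 s C hC H


/-- `lim_{R→∞} \overline{dim}_B (B(O,R) ∩ E) = 0`, i.e. `\overline{dim}_{GB}^* E = 0`,
while `\overline{dim}_{GB} E = 1`; so `\overline{dim}_{GB}^*` can be strictly smaller than
the generalized upper box dimension. -/
theorem exampleSetE_starDim_lt_genUpperBoxDim :
    Tendsto (fun R : ℝ => upperBoxDim (closedBall (0 : ℝ) R ∩ exampleSetE)) atTop (𝓝 0) ∧
      genUpperBoxDim exampleSetE = 1 := by
  constructor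
  · have h1 : ∀ R : ℝ, upperBoxDim (Metric.closedBall (0:ℝ) R ∩ exampleSetE) = 0 :=
      fun R => upperBoxDim_of_finite' (finite_ball_inter_exampleSetE R)
    have heq : (fun R : ℝ => upperBoxDim (Metric.closedBall (0:ℝ) R ∩ exampleSetE))
        = fun _ : ℝ => (0:ℝ) := funext h1
    rw [heq]
    exact tendsto_const_nhds
  · rw [genUpperBoxDim]
    have hev : ∀ᶠ θ in 𝓝[>] (0:ℝ),
        assouadSpectrum θ exampleSetE = (fun _ : ℝ => (1:ℝ)) θ := by
      filter_upwards [Ioo_mem_nhdsGT_of_mem (show (0:ℝ) ∈ Set.Ico (0:ℝ) 1 by norm_num)] with θ hθ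
      exact assouadSpectrum_exampleSetE θ hθ.1 hθ.2
    rw [limsup_congr hev, limsup_const]

end
end
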